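/- For every integer n ≥ 0 there exists a polynomial P_n in three variables with nonnegative integer coefficients such that, in K, μ_n · ∏_{k=1}^{n+1} [ν+k]_q^{⌊(n+1)/k⌋} = Q^n · [ν+1]_q · P_n(q, Q, [ν]_q). Equivalently (Theorem 1.4, the conjecture of Delest and Fédou): in the expansion J_{ν+1}((1−q)z;q^{−1})/J_ν((1−q)z;q^{−1}) = −∑_{n≥1} (N_{n,ν}(q)/D_{n,ν}(q)) q^{(ν+1)n} z^{2n−1} with D_{n,ν}(q) = ∏_{k=1}^{n} [k+ν]_q^{⌊n/k⌋}, every numerator N_{n,ν}(q) is a polynomial in q, q^ν and [ν]_q with nonnegative integer coefficients. -/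

import Mathlib

/- Let `K` be the fraction field of `ℚ[q,Q]`, where `Q` plays the role of `q^ν`.
`θν` and `θν1` are the series `θ_ν` and `θ_{ν+1}` of the Hahn–Exton `q`-Bessel
functions, and `μ n` are the coefficients of `θ_{ν+1}/θ_ν`. -/

noncomputable section

abbrev K : Type := FractionRing (MvPolynomial (Fin 2) ℚ)

def qv : K := algebraMap (MvPolynomial (Fin 2) ℚ) K (MvPolynomial.X 0)

def Qv : K := algebraMap (MvPolynomial (Fin 2) ℚ) K (MvPolynomial.X 1)

/-- The q-Pochhammer symbol `(a;q)_n`. -/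
def qPoch (a : K) (n : ℕ) : K := ∏ j ∈ Finset.range n, (1 - a * qv ^ j)

/-- `[ν+k]_q = (1 - Q q^k)/(1-q)`. -/
def brk (k : ℕ) : K := (1 - Qv * qv ^ k) / (1 - qv)

/-- `[ν]_q = (1 - Q)/(1-q)`. -/
def brNu : K := (1 - Qv) / (1 - qv)

/-- `θ_ν(x)`. -/
def θν : PowerSeries K :=
  PowerSeries.mk fun n =>
    (-1) ^ n * qv ^ (n * (n - 1) / 2) * Qv ^ n * (1 - qv) ^ (2 * n)
      / (qPoch qv n * qPoch (Qv * qv) n)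

/-- `θ_{ν+1}(x)`, i.e. `θ_ν` with `Q` replaced by `Qq`. -/
def θν1 : PowerSeries K :=
  PowerSeries.mk fun n =>
    (-1) ^ n * qv ^ (n * (n - 1) / 2) * (Qv * qv) ^ n * (1 - qv) ^ (2 * n)
      / (qPoch qv n * qPoch (Qv * qv ^ 2) n)

/-- The coefficients `μ_n` of `θ_{ν+1}(x)/θ_ν(x)`. -/
def μ (n : ℕ) : K := PowerSeries.coeff n (θν1 * θν⁻¹)

/-! The ratio `f = θ_{ν+1}/θ_ν` satisfies a `q`-Riccati equation, which follows from two
contiguous relations between `θ_ν(x)`, `θ_ν(qx)`, `θ_{ν+1}(x)` and `θ_{ν+1}(qx)`. Comparing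
coefficients gives `[ν+1] [ν+m+2] μ_{m+1} = Q (μ_m + Q ∑_{i<m} q^{m-i+1} μ_i μ_{m-i})`, a recurrence
with nonnegative coefficients. As `⌊a/k⌋ + ⌊b/k⌋ ≤ ⌊(a+b)/k⌋`, the denominator `D_{m+2}` is
`[ν+m+2] D_{i+1} D_{m-i+1}` times a product of brackets `[ν+k] = 1 + q + ⋯ + q^{k-1} + q^k [ν]`,
so by strong induction `μ_n D_{n+1} / (Q^n [ν+1])` is a polynomial in `q`, `Q`, `[ν]` with
coefficients in `ℕ`. -/

open PowerSeries Finset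

-- Applied with `a, b = θ_ν(x), θ_{ν+1}(x)`, primes for the values at `qx`, `c = 1 - Qq`, `t = Qq`,
-- `d = Q (1 - q)² x`; then `h₁, h₂` are the contiguous relations of the `θ`'s.
lemma riccati_of_contiguous {R : Type*} [CommRing R] [IsDomain R] {a b a' b' f f' c t d : R}
    (hct : c + t = 1) (h₁ : c * a' = c * a + d * b) (h₂ : b - b' = c * (a' - b'))
    (hf : f * a = b) (hf' : f' * a' = b') (ha : a ≠ 0) (ha' : a' ≠ 0) :
    c * (f - 1 - t * (f' - 1)) = d * f * (c + t * f') := by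
  apply mul_left_cancel₀ (mul_ne_zero ha ha')
  subst hf hf'
  linear_combination (a' * c + t * f' * a') * h₁ + c * a' * h₂ + c * a' * (a - f' * a') * hct

lemma coeff_succ_of_riccati {R : Type*} [CommRing R] {f : R⟦X⟧} {c t d q : R}
    (h : C c * (f - 1 - C t * (rescale q f - 1)) = C d * X * f * (C c + C t * rescale q f))
    (m : ℕ) :
    c * (1 - t * q ^ (m + 1)) * coeff (m + 1) f =
      d * (c * coeff m f + t * ∑ p ∈ antidiagonal m, coeff p.1 f * (q ^ p.2 * coeff p.2 f)) := by
  have h := congrArg (coeff (m + 1)) h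
  rw [mul_assoc, mul_assoc, mul_add, mul_left_comm f (C t)] at h
  simp only [coeff_C_mul, coeff_succ_X_mul, map_add, map_sub, coeff_one, coeff_mul_C,
    coeff_rescale] at h
  simp only [coeff_mul, coeff_rescale, Nat.add_one_ne_zero, if_false, sub_zero] at h
  linear_combination h

section FloorProd

variable {M : Type*} [CommMonoid M] (f : ℕ → M)

def floorProd (n : ℕ) : M := ∏ k ∈ Icc 1 n, f k ^ (n / k)

-- No truncation occurs in the exponents, since `⌊a/k⌋ + ⌊b/k⌋ ≤ ⌊(a+b)/k⌋`.
def floorProdExcess (a b : ℕ) : M :=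
  ∏ k ∈ Icc 1 (a + b + 1), f k ^ ((a + b + 2) / k - (a + 1) / k - (b + 1) / k)

lemma floorProd_eq_prod_Icc {n s : ℕ} (h : n ≤ s) :
    floorProd f n = ∏ k ∈ Icc 1 s, f k ^ (n / k) :=
  prod_subset (Icc_subset_Icc_right h) fun k hk hkn => by
    rw [Nat.div_eq_of_lt (by simp only [mem_Icc] at hk hkn; omega), pow_zero]

lemma floorProd_add_add (a b : ℕ) :
    floorProd f (a + b + 2) =
      f (a + b + 2) * floorProd f (a + 1) * floorProd f (b + 1) * floorProdExcess f a b := by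
  rw [floorProd, prod_Icc_succ_top (by omega), Nat.div_self (by omega), pow_one,
    floorProd_eq_prod_Icc f (show a + 1 ≤ a + b + 1 by omega),
    floorProd_eq_prod_Icc f (show b + 1 ≤ a + b + 1 by omega), floorProdExcess, mul_comm,
    mul_assoc, mul_assoc, ← prod_mul_distrib, ← prod_mul_distrib]
  congr 1
  refine prod_congr rfl fun k _ => ?_
  rw [← pow_add, ← pow_add]
  have hfloor := Nat.div_add_div_le_add_div (x := a + 1) (y := b + 1) (z := k)
  rw [show a + 1 + (b + 1) = a + b + 2 by omega] at hfloor
  congr 1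
  omega

end FloorProd

lemma algebraMap_ne_zero_of_eval_ne_zero {p : MvPolynomial (Fin 2) ℚ} (v : Fin 2 → ℚ)
    (h : MvPolynomial.eval v p ≠ 0) : algebraMap (MvPolynomial (Fin 2) ℚ) K p ≠ 0 :=
  (map_ne_zero_iff _ (IsFractionRing.injective _ K)).2 (by rintro rfl; simp at h)

lemma Qv_ne_zero : Qv ≠ 0 := algebraMap_ne_zero_of_eval_ne_zero 1 (by simp)

lemma one_sub_qv_pow_ne_zero (m : ℕ) : 1 - qv ^ (m + 1) ≠ 0 := by
  convert algebraMap_ne_zero_of_eval_ne_zero (p := 1 - MvPolynomial.X 0 ^ (m + 1)) 0 (by simp)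
  simp [qv]

lemma one_sub_qv_ne_zero : 1 - qv ≠ 0 := by simpa using one_sub_qv_pow_ne_zero 0

lemma one_sub_Qv_mul_qv_pow_ne_zero (m : ℕ) : 1 - Qv * qv ^ m ≠ 0 := by
  convert algebraMap_ne_zero_of_eval_ne_zero
    (p := 1 - MvPolynomial.X 1 * MvPolynomial.X 0 ^ m) 0 (by simp)
  simp [qv, Qv]

lemma brk_ne_zero (k : ℕ) : brk k ≠ 0 :=
  div_ne_zero (one_sub_Qv_mul_qv_pow_ne_zero k) one_sub_qv_ne_zero

lemma one_sub_Qv_mul_qv_pow_eq (k : ℕ) : 1 - Qv * qv ^ k = brk k * (1 - qv) :=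
  (div_mul_cancel₀ _ one_sub_qv_ne_zero).symm

lemma brk_eq_geom_sum_add (k : ℕ) : brk k = ∑ i ∈ range k, qv ^ i + qv ^ k * brNu := by
  rw [brk, brNu, div_eq_iff one_sub_qv_ne_zero, add_mul, mul_assoc,
    div_mul_cancel₀ _ one_sub_qv_ne_zero, geom_sum_mul_neg]
  ring

lemma qPoch_succ (a : K) (n : ℕ) : qPoch a (n + 1) = qPoch a n * (1 - a * qv ^ n) :=
  prod_range_succ _ _

lemma qPoch_succ' (a : K) (n : ℕ) : qPoch a (n + 1) = (1 - a) * qPoch (a * qv) n := by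
  simp only [qPoch, prod_range_succ', pow_zero, mul_one, pow_succ, mul_assoc, mul_comm]

lemma qPoch_ne_zero {a : K} (h : ∀ j, 1 - a * qv ^ j ≠ 0) (n : ℕ) : qPoch a n ≠ 0 :=
  prod_ne_zero_iff.2 fun j _ => h j

lemma qPoch_qv_ne_zero (n : ℕ) : qPoch qv n ≠ 0 :=
  qPoch_ne_zero (fun j => by rw [← pow_succ']; exact one_sub_qv_pow_ne_zero j) n

lemma qPoch_Qv_mul_qv_pow_ne_zero (e n : ℕ) : qPoch (Qv * qv ^ e) n ≠ 0 :=
  qPoch_ne_zero (fun j => by rw [mul_assoc, ← pow_add]; exact one_sub_Qv_mul_qv_pow_ne_zero _) n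

lemma Qv_mul_qv_sq_eq : Qv * qv ^ 2 = Qv * qv * qv := by ring

lemma coeff_succ_θν (m : ℕ) :
    (1 - Qv * qv) * (qv ^ (m + 1) - 1) * coeff (m + 1) θν = Qv * (1 - qv) ^ 2 * coeff m θν1 := by
  have h₁ := qPoch_qv_ne_zero m
  have h₂ := qPoch_Qv_mul_qv_pow_ne_zero 2 m
  have h₃ := one_sub_qv_pow_ne_zero m
  have h₄ := one_sub_Qv_mul_qv_pow_ne_zero 1
  simp only [θν, θν1, coeff_mk, qPoch_succ' (Qv * qv), ← Qv_mul_qv_sq_eq, qPoch_succ qv,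
    Nat.triangle_succ, ← pow_succ']
  rw [pow_one] at h₄
  field_simp
  ring

lemma coeff_θν1 (n : ℕ) :
    (1 - Qv * qv ^ (n + 1)) * coeff n θν1 = qv ^ n * (1 - Qv * qv) * coeff n θν := by
  have h₁ := qPoch_qv_ne_zero n
  have h₂ := qPoch_Qv_mul_qv_pow_ne_zero 2 n
  have h₃ : qPoch (Qv * qv) n ≠ 0 := by simpa using qPoch_Qv_mul_qv_pow_ne_zero 1 n
  have hshift :
      qPoch (Qv * qv) n * (1 - Qv * qv ^ (n + 1)) = (1 - Qv * qv) * qPoch (Qv * qv ^ 2) n := by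
    rw [Qv_mul_qv_sq_eq, ← qPoch_succ', qPoch_succ, mul_assoc, ← pow_succ']
  simp only [θν, θν1, coeff_mk]
  rw [mul_div_assoc', mul_div_assoc', div_eq_div_iff (mul_ne_zero h₁ h₂) (mul_ne_zero h₁ h₃)]
  linear_combination
    (-1) ^ n * qv ^ (n * (n - 1) / 2) * Qv ^ n * qv ^ n * (1 - qv) ^ (2 * n) * qPoch qv n * hshift
lemma constantCoeff_θν : constantCoeff θν = 1 := by
  simp [θν, qPoch]

lemma constantCoeff_θν1 : constantCoeff θν1 = 1 := by
  simp [θν1, qPoch]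

lemma rescale_θν :
    C (1 - Qv * qv) * rescale qv θν = C (1 - Qv * qv) * θν + C (Qv * (1 - qv) ^ 2) * X * θν1 := by
  ext (_ | m)
  · simp only [coeff_C_mul, map_add, coeff_rescale, pow_zero, one_mul, mul_assoc, coeff_zero_X_mul,
      mul_zero, add_zero]
  · simp only [coeff_C_mul, map_add, coeff_rescale, mul_assoc, coeff_succ_X_mul]
    linear_combination coeff_succ_θν m

lemma rescale_θν1 : θν1 - rescale qv θν1 = C (1 - Qv * qv) * (rescale qv θν - rescale qv θν1) := by
  ext n
  rw [coeff_C_mul]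
  simp only [map_sub, coeff_rescale]
  linear_combination coeff_θν1 n

lemma riccati_θν1_mul_inv :
    C (1 - Qv * qv) * (θν1 * θν⁻¹ - 1 - C (Qv * qv) * (rescale qv (θν1 * θν⁻¹) - 1)) =
      C (Qv * (1 - qv) ^ 2) * X * (θν1 * θν⁻¹) *
        (C (1 - Qv * qv) + C (Qv * qv) * rescale qv (θν1 * θν⁻¹)) := by
  have hθν : constantCoeff θν ≠ 0 := by simp [constantCoeff_θν]
  have hdiv : θν1 * θν⁻¹ * θν = θν1 := by rw [mul_assoc, PowerSeries.inv_mul_cancel _ hθν, mul_one]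
  refine riccati_of_contiguous (by rw [← map_add, sub_add_cancel, map_one]) rescale_θν rescale_θν1
    hdiv (by rw [← map_mul, hdiv]) (fun h => hθν (by simp [h])) (fun h => hθν ?_)
  simpa [← coeff_zero_eq_constantCoeff] using congrArg constantCoeff h

lemma μ_zero : μ 0 = 1 := by
  simp [μ, constantCoeff_θν, constantCoeff_θν1]

lemma μ_succ (m : ℕ) :
    brk 1 * brk (m + 2) * μ (m + 1) =
      Qv * (μ m + Qv * ∑ i ∈ range m, qv ^ (m - i + 1) * μ i * μ (m - i)) := by
  have h := coeff_succ_of_riccati riccati_θν1_mul_inv m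
  simp only [← μ.eq_def, Nat.sum_antidiagonal_eq_sum_range_succ_mk, sum_range_succ, Nat.sub_self,
    pow_zero, μ_zero, mul_one] at h
  have hsum : Qv * qv * ∑ i ∈ range m, μ i * (qv ^ (m - i) * μ (m - i)) =
      Qv * ∑ i ∈ range m, qv ^ (m - i + 1) * μ i * μ (m - i) := by
    rw [mul_sum, mul_sum]
    exact sum_congr rfl fun i _ => by ring
  apply mul_left_cancel₀ (pow_ne_zero 2 one_sub_qv_ne_zero)
  have e₁ := one_sub_Qv_mul_qv_pow_eq 1
  have e₂ := one_sub_Qv_mul_qv_pow_eq (m + 2)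
  rw [pow_one] at e₁
  linear_combination h - (1 - Qv * qv ^ (m + 2)) * μ (m + 1) * e₁
    - brk 1 * (1 - qv) * μ (m + 1) * e₂ + (1 - qv) ^ 2 * Qv * hsum

def reducedNumerator (n : ℕ) : K := μ n * floorProd brk (n + 1) / (Qv ^ n * brk 1)

lemma μ_mul_floorProd (n : ℕ) :
    μ n * floorProd brk (n + 1) = Qv ^ n * brk 1 * reducedNumerator n :=
  (mul_div_cancel₀ _ (mul_ne_zero (pow_ne_zero _ Qv_ne_zero) (brk_ne_zero 1))).symm

lemma reducedNumerator_zero : reducedNumerator 0 = 1 := by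
  simp [reducedNumerator, floorProd, μ_zero, brk_ne_zero]

lemma μ_mul_μ_mul_floorProd {i m : ℕ} (hi : i ≤ m) :
    μ i * μ (m - i) * floorProd brk (m + 2) =
      Qv ^ m * brk 1 ^ 2 * brk (m + 2) *
        (reducedNumerator i * reducedNumerator (m - i) * floorProdExcess brk i (m - i)) := by
  have hsplit := floorProd_add_add brk i (m - i)
  have hQ : Qv ^ i * Qv ^ (m - i) = Qv ^ m := by rw [← pow_add, Nat.add_sub_cancel' hi]
  rw [Nat.add_sub_cancel' hi] at hsplit
  rw [hsplit]
  linear_combination brk (m + 2) * floorProdExcess brk i (m - i) *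
    (μ (m - i) * floorProd brk (m - i + 1) * μ_mul_floorProd i
      + Qv ^ i * brk 1 * reducedNumerator i * μ_mul_floorProd (m - i)
      + brk 1 ^ 2 * reducedNumerator i * reducedNumerator (m - i) * hQ)

lemma reducedNumerator_succ (m : ℕ) :
    reducedNumerator (m + 1) =
      reducedNumerator m * floorProdExcess brk m 0 +
        Qv * ∑ i ∈ range m, qv ^ (m - i + 1) *
          (reducedNumerator i * reducedNumerator (m - i) * floorProdExcess brk i (m - i)) := by
  have hsum : (∑ i ∈ range m, qv ^ (m - i + 1) * μ i * μ (m - i)) * floorProd brk (m + 2) =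
      Qv ^ m * brk 1 ^ 2 * brk (m + 2) * ∑ i ∈ range m, qv ^ (m - i + 1) *
        (reducedNumerator i * reducedNumerator (m - i) * floorProdExcess brk i (m - i)) := by
    rw [sum_mul, mul_sum]
    refine sum_congr rfl fun i hi => ?_
    linear_combination qv ^ (m - i + 1) * μ_mul_μ_mul_floorProd (mem_range.1 hi).le
  have hlast := μ_mul_μ_mul_floorProd (le_refl m)
  rw [Nat.sub_self, μ_zero, reducedNumerator_zero] at hlast
  apply mul_left_cancel₀ (mul_ne_zero (mul_ne_zero (pow_ne_zero (m + 1) Qv_ne_zero)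
    (pow_ne_zero 2 (brk_ne_zero 1))) (brk_ne_zero (m + 2)))
  linear_combination floorProd brk (m + 2) * μ_succ m
    - brk 1 * brk (m + 2) * μ_mul_floorProd (m + 1) + Qv * hlast + Qv ^ 2 * hsum

def natPolyValues : Subalgebra ℕ K := (MvPolynomial.aeval ![qv, Qv, brNu]).range

lemma qv_mem_natPolyValues : qv ∈ natPolyValues := ⟨MvPolynomial.X 0, by simp⟩

lemma Qv_mem_natPolyValues : Qv ∈ natPolyValues := ⟨MvPolynomial.X 1, by simp⟩

lemma brNu_mem_natPolyValues : brNu ∈ natPolyValues := ⟨MvPolynomial.X 2, by simp⟩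

lemma brk_mem_natPolyValues (k : ℕ) : brk k ∈ natPolyValues := by
  rw [brk_eq_geom_sum_add]
  exact add_mem (sum_mem fun i _ => pow_mem qv_mem_natPolyValues i)
    (mul_mem (pow_mem qv_mem_natPolyValues k) brNu_mem_natPolyValues)

lemma reducedNumerator_mem_natPolyValues (n : ℕ) : reducedNumerator n ∈ natPolyValues := by
  induction n using Nat.strong_induction_on with
  | _ n ih =>
    have hexcess (a b : ℕ) : floorProdExcess brk a b ∈ natPolyValues :=
      prod_mem fun k _ => pow_mem (brk_mem_natPolyValues k) _
    rcases n with _ | m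
    · rw [reducedNumerator_zero]
      exact one_mem _
    · rw [reducedNumerator_succ]
      refine add_mem (mul_mem (ih m (by omega)) (hexcess m 0))
        (mul_mem Qv_mem_natPolyValues (sum_mem fun i hi => ?_))
      have hi := mem_range.1 hi
      exact mul_mem (pow_mem qv_mem_natPolyValues _)
        (mul_mem (mul_mem (ih i (by omega)) (ih (m - i) (by omega))) (hexcess i (m - i)))

/-- The `q`-Kishore theorem for Hahn–Exton `q`-Bessel functions (Theorem 1.4, the
conjecture of Delest and Fédou): `μ_n ∏_{k=1}^{n+1} [ν+k]_q^{⌊(n+1)/k⌋}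
= Q^n [ν+1]_q P_n(q, Q, [ν]_q)` for a polynomial `P_n` with nonnegative integer
coefficients. -/
theorem q_kishore_hahn_exton (n : ℕ) :
    ∃ P : MvPolynomial (Fin 3) ℕ,
      μ n * ∏ k ∈ Finset.Icc 1 (n + 1), brk k ^ ((n + 1) / k)
        = Qv ^ n * brk 1 * MvPolynomial.aeval ![qv, Qv, brNu] P := by
  obtain ⟨P, hP⟩ := reducedNumerator_mem_natPolyValues n
  exact ⟨P, hP ▸ μ_mul_floorProd n⟩

end
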